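/- The ℓ₁ reconstruction loss corresponds to a Laplace model: for Laplace measures of equal scale, the Kullback–Leibler divergence is an increasing function of the absolute distance between the location parameters. Precisely, for all μ₁, μ₂ ∈ ℝ and b > 0, KL( Laplace(μ₁, b) ‖ Laplace(μ₂, b) ) = |μ₁ − μ₂|/b + exp(−|μ₁ − μ₂|/b) − 1. In particular, minimizing the KL divergence over μ₂ is equivalent to minimizing the absolute error |μ₁ − μ₂|. -/

import Mathlib

/-
Both densities are positive, so the divergence is the `Laplace(μ, b)`-mean of the
log-likelihood ratio `(|x - ν| - |x - μ|) / b`. After centring at `μ`, the integrand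
`e^{-|y|/b} (|y - d| - |y|)` is bounded; averaging it with its reflection `y ↦ -y` and using
`|y - d| + |y + d| = 2 max |y| |d|` turns it into `e^{-|y|/b} max (|d| - |y|) 0`, an even
function supported on `[-|d|, |d|]` whose integral is elementary. The comparison statement then
follows because `t ↦ t + e^{-t}` is strictly increasing on `[0, ∞)`.
-/

open MeasureTheory

/-- Kullback–Leibler divergence `KL(P ‖ R) = ∫ log (dP/dR) dP`
(for `P` absolutely continuous with respect to `R`). -/
noncomputable def klReal {Ω : Type*} [MeasurableSpace Ω] (P R : Measure Ω) : ℝ :=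
  ∫ x, Real.log ((P.rnDeriv R x).toReal) ∂P

/-- The Laplace measure on `ℝ` with location `μ` and scale `b`, with density
`x ↦ (1/(2b)) exp(-|x-μ|/b)` with respect to Lebesgue measure. -/
noncomputable def laplaceReal (μ b : ℝ) : Measure ℝ :=
  volume.withDensity fun x => ENNReal.ofReal ((1 / (2 * b)) * Real.exp (-|x - μ| / b))

open Real Set

theorem abs_sub_add_abs_add (x d : ℝ) : |x - d| + |x + d| = 2 * max |x| |d| := by
  rcases max_cases |x| |d| with ⟨h, _⟩ | ⟨h, _⟩ <;> rw [h] <;>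
    cases abs_cases x <;> cases abs_cases d <;> cases abs_cases (x - d) <;>
    cases abs_cases (x + d) <;> linarith

theorem strictMonoOn_add_exp_neg : StrictMonoOn (fun t => t + exp (-t)) (Ici 0) := by
  intro s hs t _ hst
  have hexp : s - t + 1 < exp (s - t) := add_one_lt_exp (by linarith)
  have hsplit : exp (-t) = exp (-s) * exp (s - t) := by rw [← exp_add]; ring_nf
  have hs1 : exp (-s) ≤ 1 := exp_le_one_iff.2 (by simpa using hs)
  have hs0 : 0 < exp (-s) := exp_pos _
  show s + exp (-s) < t + exp (-t)
  nlinarith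

theorem integral_sub_mul_exp_neg_div (a : ℝ) {b : ℝ} (hb : b ≠ 0) :
    ∫ t in (0 : ℝ)..a, (a - t) * exp (-t / b) = b * (a - b + b * exp (-a / b)) := by
  have hderiv : ∀ t ∈ uIcc 0 a,
      HasDerivAt (fun t => b * (t - a + b) * exp (-t / b)) ((a - t) * exp (-t / b)) t := by
    intro t _
    have hlin : HasDerivAt (fun t => b * (t - a + b)) b t := by
      simpa using (((hasDerivAt_id t).sub_const a).add_const b).const_mul b
    have hexp : HasDerivAt (fun t => exp (-t / b)) (exp (-t / b) * (-1 / b)) t :=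
      ((hasDerivAt_neg t).div_const b).exp
    refine (hlin.mul hexp).congr_deriv ?_
    field_simp
    ring
  have hcont : Continuous fun t => (a - t) * exp (-t / b) := by fun_prop
  rw [intervalIntegral.integral_eq_sub_of_hasDerivAt hderiv (hcont.intervalIntegrable _ _)]
  simp only [sub_self, zero_add, zero_sub, neg_zero, zero_div, exp_zero, mul_one]
  ring

theorem integrable_exp_neg_abs_div {b : ℝ} (hb : 0 < b) : Integrable fun x => exp (-|x| / b) := by
  rw [← integrableOn_univ, ← Iic_union_Ioi (a := (0 : ℝ)), integrableOn_union]
  constructor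
  · refine (integrableOn_exp_mul_Iic (inv_pos.2 hb) 0).congr_fun (fun x hx => ?_) measurableSet_Iic
    rw [abs_of_nonpos hx, neg_neg, div_eq_inv_mul]
  · refine (integrableOn_exp_mul_Ioi (neg_lt_zero.2 (inv_pos.2 hb)) 0).congr_fun
      (fun x hx => ?_) measurableSet_Ioi
    dsimp only
    rw [abs_of_pos hx]
    ring_nf

theorem integral_exp_neg_abs_div_mul_abs_sub_sub_abs {b : ℝ} (hb : 0 < b) (d : ℝ) :
    ∫ y, exp (-|y| / b) * (|y - d| - |y|) = 2 * b * (|d| - b + b * exp (-|d| / b)) := by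
  set g : ℝ → ℝ := fun y => exp (-|y| / b) * (|y - d| - |y|)
  set h : ℝ → ℝ := fun t => exp (-t / b) * max (|d| - t) 0
  have hg : Integrable g := by
    refine ((integrable_exp_neg_abs_div hb).mul_const |d|).mono' (by fun_prop)
      (ae_of_all _ fun y => ?_)
    rw [norm_mul, norm_of_nonneg (exp_pos _).le, Real.norm_eq_abs]
    exact mul_le_mul_of_nonneg_left (by simpa using abs_abs_sub_abs_le_abs_sub (y - d) y)
      (exp_pos _).le
  have hsymm : ∀ y, (g y + g (-y)) / 2 = h |y| := by
    intro y
    have hflip : |-y - d| = |y + d| := by rw [← abs_neg]; ring_nf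
    calc (g y + g (-y)) / 2 = exp (-|y| / b) * ((|y - d| + |y + d|) / 2 - |y|) := by
          simp only [g, abs_neg, hflip]; ring
      _ = h |y| := by
          rw [abs_sub_add_abs_add, mul_div_cancel_left₀ _ two_ne_zero, ← max_sub_sub_right,
            sub_self, max_comm]
  have hIoi : ∫ t in Ioi 0, h t = ∫ t in (0 : ℝ)..|d|, (|d| - t) * exp (-t / b) := by
    rw [intervalIntegral.integral_of_le (abs_nonneg d),
      setIntegral_eq_of_subset_of_forall_sdiff_eq_zero measurableSet_Ioi Ioc_subset_Ioi_self]
    · refine setIntegral_congr_fun measurableSet_Ioc fun t ht => ?_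
      simp only [h]
      rw [max_eq_left (by linarith [ht.2]), mul_comm]
    · rintro t ⟨ht0, htd⟩
      have hdt : |d| < t := by simp only [mem_Ioc, not_and, not_le] at htd; exact htd ht0
      simp only [h]
      rw [max_eq_right (by linarith), mul_zero]
  calc ∫ y, g y = ∫ y, (g y + g (-y)) / 2 := by
        rw [integral_div, integral_add hg hg.comp_neg, integral_neg_eq_self]; ring
    _ = ∫ y, h |y| := by simp only [hsymm]
    _ = 2 * b * (|d| - b + b * exp (-|d| / b)) := by
        rw [integral_comp_abs, hIoi, integral_sub_mul_exp_neg_div _ hb.ne']; ring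

theorem klReal_withDensity_ofReal {α : Type*} [MeasurableSpace α] (ν : Measure α) [SigmaFinite ν]
    {f g : α → ℝ} (hf : Measurable f) (hg : Measurable g) (hf0 : ∀ x, 0 ≤ f x)
    (hg0 : ∀ x, 0 < g x) :
    klReal (ν.withDensity fun x => ENNReal.ofReal (f x))
        (ν.withDensity fun x => ENNReal.ofReal (g x)) = ∫ x, f x * log (f x / g x) ∂ν := by
  set Q := ν.withDensity fun x => ENNReal.ofReal (g x)
  have hratio : Measurable fun x => ENNReal.ofReal (f x / g x) := (hf.div hg).ennreal_ofReal
  have hP : ν.withDensity (fun x => ENNReal.ofReal (f x))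
      = Q.withDensity fun x => ENNReal.ofReal (f x / g x) := by
    rw [← withDensity_mul _ hg.ennreal_ofReal hratio]
    congr 1 with x
    rw [Pi.mul_apply, ← ENNReal.ofReal_mul (hg0 x).le, mul_div_cancel₀ _ (hg0 x).ne']
  have hrn : ∀ᵐ x ∂(ν.withDensity fun x => ENNReal.ofReal (f x)),
      (ν.withDensity fun x => ENNReal.ofReal (f x)).rnDeriv Q x = ENNReal.ofReal (f x / g x) := by
    rw [hP]
    exact (withDensity_absolutelyContinuous Q _).ae_eq (Measure.rnDeriv_withDensity Q hratio)
  rw [klReal, integral_congr_ae (hrn.mono fun x hx => by rw [hx]),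
    integral_withDensity_eq_integral_toReal_smul hf.ennreal_ofReal
      (ae_of_all _ fun _ => ENNReal.ofReal_lt_top)]
  congr 1 with x
  rw [ENNReal.toReal_ofReal (hf0 x), ENNReal.toReal_ofReal (div_nonneg (hf0 x) (hg0 x).le),
    smul_eq_mul]

noncomputable def laplacePDF (μ b x : ℝ) : ℝ := 1 / (2 * b) * exp (-|x - μ| / b)

theorem laplaceReal_eq_withDensity_laplacePDF (μ b : ℝ) :
    laplaceReal μ b = volume.withDensity fun x => ENNReal.ofReal (laplacePDF μ b x) := rfl

theorem log_laplacePDF_div_laplacePDF {b : ℝ} (hb : b ≠ 0) (μ ν x : ℝ) :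
    log (laplacePDF μ b x / laplacePDF ν b x) = (|x - ν| - |x - μ|) / b := by
  unfold laplacePDF
  rw [mul_div_mul_left _ _ (by positivity), ← exp_sub, log_exp]
  ring

theorem integral_laplacePDF_mul_abs_sub_sub_abs {b : ℝ} (hb : 0 < b) (μ ν : ℝ) :
    ∫ x, laplacePDF μ b x * (|x - ν| - |x - μ|)
      = |μ - ν| - b + b * exp (-|μ - ν| / b) := by
  calc ∫ x, laplacePDF μ b x * (|x - ν| - |x - μ|)
      = ∫ y, laplacePDF μ b (y + μ) * (|y + μ - ν| - |y + μ - μ|) :=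
        (integral_add_right_eq_self _ μ).symm
    _ = ∫ y, 1 / (2 * b) * (exp (-|y| / b) * (|y - (ν - μ)| - |y|)) := by
        congr 1 with y
        simp only [laplacePDF, add_sub_cancel_right, show y + μ - ν = y - (ν - μ) by ring]
        ring
    _ = |μ - ν| - b + b * exp (-|μ - ν| / b) := by
        rw [integral_const_mul, integral_exp_neg_abs_div_mul_abs_sub_sub_abs hb, abs_sub_comm]
        field_simp

theorem klReal_laplaceReal {b : ℝ} (hb : 0 < b) (μ ν : ℝ) :
    klReal (laplaceReal μ b) (laplaceReal ν b) = |μ - ν| / b + exp (-|μ - ν| / b) - 1 := by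
  have hmeas : ∀ μ, Measurable (laplacePDF μ b) := fun μ => by unfold laplacePDF; fun_prop
  rw [laplaceReal_eq_withDensity_laplacePDF, laplaceReal_eq_withDensity_laplacePDF,
    klReal_withDensity_ofReal volume (hmeas μ) (hmeas ν)
    (fun x => by unfold laplacePDF; positivity) (fun x => by unfold laplacePDF; positivity)]
  simp_rw [log_laplacePDF_div_laplacePDF hb.ne', mul_div_assoc', integral_div,
    integral_laplacePDF_mul_abs_sub_sub_abs hb]
  field_simp
  ring

/-- For Laplace measures of equal scale `b > 0`, the Kullback–Leibler divergence is an increasing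
function of the absolute distance between the locations:
`KL(Laplace(μ₁,b) ‖ Laplace(μ₂,b)) = |μ₁-μ₂|/b + exp(-|μ₁-μ₂|/b) - 1`. In particular, minimizing
the KL divergence over the second location is equivalent to minimizing the absolute error. -/
theorem laplace_kl_eq_function_of_absolute_distance (μ₁ μ₂ b : ℝ) (hb : 0 < b) :
    klReal (laplaceReal μ₁ b) (laplaceReal μ₂ b)
      = |μ₁ - μ₂| / b + Real.exp (-|μ₁ - μ₂| / b) - 1 ∧
    ∀ ν ν' : ℝ,
      (klReal (laplaceReal μ₁ b) (laplaceReal ν b) ≤ klReal (laplaceReal μ₁ b) (laplaceReal ν' b) ↔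
      |μ₁ - ν| ≤ |μ₁ - ν'|) := by
  refine ⟨klReal_laplaceReal hb μ₁ μ₂, fun ν ν' => ?_⟩
  have hmono := strictMonoOn_add_exp_neg.le_iff_le (a := |μ₁ - ν| / b) (b := |μ₁ - ν'| / b)
    (div_nonneg (abs_nonneg _) hb.le) (div_nonneg (abs_nonneg _) hb.le)
  rw [klReal_laplaceReal hb, klReal_laplaceReal hb, sub_le_sub_iff_right, neg_div, neg_div]
  exact hmono.trans (div_le_div_iff_of_pos_right hb)
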